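/- Let d ≥ 2 be an integer, θ ∈ (0,1], and let (a_n)_{n∈ℕ} be a strictly decreasing sequence of positive reals converging to 0. If updim_θ({a_n : n ∈ ℕ}) = 1, then updim_θ(C^d({a_n})) = d; likewise, if lodim_θ({a_n : n ∈ ℕ}) = 1, then lodim_θ(C^d({a_n})) = d. -/

import Mathlib

open Set Metric Filter

/-- The upper θ-intermediate dimension of a set `E` in a metric space:
the infimum of all `s ≥ 0` such that for every `ε > 0` there is `δ₀ > 0` such that for all
`0 < δ < δ₀` there is a countable cover `𝒰` of `E` with `δ ≤ diam U ≤ δ ^ θ` for all `U ∈ 𝒰`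
and `∑_{U ∈ 𝒰} (diam U) ^ s ≤ ε`. -/
noncomputable def updim {X : Type*} [PseudoMetricSpace X] (θ : ℝ) (E : Set X) : ℝ :=
  sInf {s : ℝ | 0 ≤ s ∧ ∀ ε : ℝ, 0 < ε → ∃ δ₀ : ℝ, 0 < δ₀ ∧ ∀ δ : ℝ, 0 < δ → δ < δ₀ →
    ∃ 𝒰 : Set (Set X), 𝒰.Countable ∧ E ⊆ ⋃₀ 𝒰 ∧
      (∀ U ∈ 𝒰, δ ≤ diam U ∧ diam U ≤ δ ^ θ) ∧
      ∑' U : 𝒰, ENNReal.ofReal (diam (U : Set X) ^ s) ≤ ENNReal.ofReal ε}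

/-- The lower θ-intermediate dimension of a set `E` in a metric space. -/
noncomputable def lodim {X : Type*} [PseudoMetricSpace X] (θ : ℝ) (E : Set X) : ℝ :=
  sInf {s : ℝ | 0 ≤ s ∧ ∀ ε : ℝ, 0 < ε → ∀ δ₀ : ℝ, 0 < δ₀ → ∃ δ : ℝ, 0 < δ ∧ δ < δ₀ ∧
    ∃ 𝒰 : Set (Set X), 𝒰.Countable ∧ E ⊆ ⋃₀ 𝒰 ∧
      (∀ U ∈ 𝒰, δ ≤ diam U ∧ diam U ≤ δ ^ θ) ∧
      ∑' U : 𝒰, ENNReal.ofReal (diam (U : Set X) ^ s) ≤ ENNReal.ofReal ε}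

/-- `C^d({a_n})`: the union over `n` of the spheres in `ℝ^d` of radius `a n` centred at
the origin. -/
noncomputable def concentricSeq (d : ℕ) (a : ℕ → ℝ) : Set (EuclideanSpace ℝ (Fin d)) :=
  {x | ∃ n : ℕ, ‖x‖ = a n}

/-!
The upper bound `d` holds for every bounded subset of `ℝ^d`: a packing argument covers it by
`O(Δ^(-d))` balls of diameter `Δ = δ^θ`.

For the lower bound, take a cover `𝒰` of `C^d({a_n})` at scale `δ` with `∑ |U|^s ≤ 1`, `s < d`.
Projecting onto a hyperplane, the sets meeting the sphere of radius `a_n` satisfy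
`∑ |U|^(d-1) ≥ a_n^(d-1)`, and each of them meets only radii within `|U|` of `‖p_U‖` for any
`p_U ∈ U`. Hence the weights `|U|^(d-1) / R^(d-1)` form a fractional cover of `{a_n > R}` by
intervals. Sorting the intervals into `K ≈ log (1/δ)` dyadic sizes and keeping the cells of the
corresponding dyadic grids that carry weight `≥ 1/K` turns it into an honest cover, at a loss of
`O(K)`; the `a_n ≤ R` are covered by a grid of mesh `Δ`. For `R = Δ^(2τ)` and `t = 1 - τ` with `τ`
small, both covers have `t`-cost tending to `0`, so `{a_n}` would have dimension `≤ t < 1`.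
-/

open Topology Module MeasureTheory
open scoped ENNReal NNReal

section CoverableAt

variable {X Y : Type*} [PseudoMetricSpace X] [PseudoMetricSpace Y]

def CoverableAt (θ s : ℝ) (E : Set X) (δ : ℝ) (ε : ℝ≥0∞) : Prop :=
  ∃ 𝒰 : Set (Set X), 𝒰.Countable ∧ E ⊆ ⋃₀ 𝒰 ∧
    (∀ U ∈ 𝒰, δ ≤ diam U ∧ diam U ≤ δ ^ θ) ∧
    ∑' U : 𝒰, ENNReal.ofReal (diam (U : Set X) ^ s) ≤ ε

variable {θ s δ : ℝ} {ε ε' : ℝ≥0∞} {E E' : Set X}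

theorem CoverableAt.mono (h : CoverableAt θ s E δ ε) (hE : E' ⊆ E) (hε : ε ≤ ε') :
    CoverableAt θ s E' δ ε' :=
  let ⟨𝒰, hc, hcov, hdiam, hsum⟩ := h
  ⟨𝒰, hc, hE.trans hcov, hdiam, hsum.trans hε⟩

theorem CoverableAt.union (h : CoverableAt θ s E δ ε) (h' : CoverableAt θ s E' δ ε') :
    CoverableAt θ s (E ∪ E') δ (ε + ε') := by
  obtain ⟨𝒰, hc, hcov, hdiam, hsum⟩ := h
  obtain ⟨𝒰', hc', hcov', hdiam', hsum'⟩ := h'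
  refine ⟨𝒰 ∪ 𝒰', hc.union hc', union_subset_union hcov hcov' |>.trans (sUnion_union _ _).ge,
    fun U hU => hU.elim (hdiam U) (hdiam' U), ?_⟩
  exact (ENNReal.tsum_union_le (fun U => ENNReal.ofReal (diam U ^ s)) _ _).trans
    (add_le_add hsum hsum')

theorem updim_eq_sInf (θ : ℝ) (E : Set X) :
    updim θ E = sInf {s | 0 ≤ s ∧
      ∀ ε : ℝ, 0 < ε → ∀ᶠ δ in 𝓝[>] 0, CoverableAt θ s E δ (ENNReal.ofReal ε)} := by
  simp only [(nhdsGT_basis (0 : ℝ)).eventually_iff, mem_Ioo, and_imp]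
  rfl

theorem lodim_eq_sInf (θ : ℝ) (E : Set X) :
    lodim θ E = sInf {s | 0 ≤ s ∧
      ∀ ε : ℝ, 0 < ε → ∃ᶠ δ in 𝓝[>] 0, CoverableAt θ s E δ (ENNReal.ofReal ε)} := by
  simp only [(nhdsGT_basis (0 : ℝ)).frequently_iff, mem_Ioo, and_assoc]
  rfl

theorem Real.sInf_nonneg_setOf_eq {P : ℝ → Prop} {D : ℝ} (hD : 0 ≤ D) (hgt : ∀ u, D < u → P u)
    (hlt : ∀ s, 0 ≤ s → s < D → ¬ P s) : sInf {s | 0 ≤ s ∧ P s} = D := by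
  refine csInf_eq_of_forall_ge_of_forall_gt_exists_lt ⟨D + 1, by linarith, hgt _ (by linarith)⟩
    (fun s hs => not_lt.1 fun hsD => hlt s hs.1 hsD hs.2) fun w hw => ?_
  exact ⟨(D + w) / 2, ⟨by linarith, hgt _ (by linarith)⟩, by linarith⟩

theorem updim_eq_of_transfer {F : Set Y} {D : ℝ} (hD : 0 ≤ D)
    (hup : ∀ u, D < u → ∀ ε : ℝ, 0 < ε → ∀ᶠ δ in 𝓝[>] 0, CoverableAt θ u E δ (ENNReal.ofReal ε))
    (hlow : ∀ s, 0 ≤ s → s < D → ∃ t, 0 ≤ t ∧ t < updim θ F ∧ ∀ ε : ℝ, 0 < ε →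
      ∀ᶠ δ in 𝓝[>] 0, CoverableAt θ s E δ 1 → CoverableAt θ t F δ (ENNReal.ofReal ε)) :
    updim θ E = D := by
  rw [updim_eq_sInf]
  refine Real.sInf_nonneg_setOf_eq hD hup fun s hs hsD hsE => ?_
  obtain ⟨t, ht₀, ht, htF⟩ := hlow s hs hsD
  have hsE₁ : ∀ᶠ δ in 𝓝[>] 0, CoverableAt θ s E δ 1 := by simpa using hsE 1 one_pos
  refine ht.not_ge (updim_eq_sInf θ F ▸ csInf_le ⟨0, fun _ h => h.1⟩ ⟨ht₀, fun ε hε => ?_⟩)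
  exact hsE₁.mp (htF ε hε)

theorem lodim_eq_of_transfer {F : Set Y} {D : ℝ} (hD : 0 ≤ D)
    (hup : ∀ u, D < u → ∀ ε : ℝ, 0 < ε → ∀ᶠ δ in 𝓝[>] 0, CoverableAt θ u E δ (ENNReal.ofReal ε))
    (hlow : ∀ s, 0 ≤ s → s < D → ∃ t, 0 ≤ t ∧ t < lodim θ F ∧ ∀ ε : ℝ, 0 < ε →
      ∀ᶠ δ in 𝓝[>] 0, CoverableAt θ s E δ 1 → CoverableAt θ t F δ (ENNReal.ofReal ε)) :
    lodim θ E = D := by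
  rw [lodim_eq_sInf]
  refine Real.sInf_nonneg_setOf_eq hD (fun u hu ε hε => (hup u hu ε hε).frequently)
    fun s hs hsD hsE => ?_
  obtain ⟨t, ht₀, ht, htF⟩ := hlow s hs hsD
  have hsE₁ : ∃ᶠ δ in 𝓝[>] 0, CoverableAt θ s E δ 1 := by simpa using hsE 1 one_pos
  refine ht.not_ge (lodim_eq_sInf θ F ▸ csInf_le ⟨0, fun _ h => h.1⟩ ⟨ht₀, fun ε hε => ?_⟩)
  exact hsE₁.mp (htF ε hε)

end CoverableAt

theorem Real.tendsto_rpow_nhdsGT_zero {p : ℝ} (hp : 0 < p) :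
    Tendsto (fun x : ℝ => x ^ p) (𝓝[>] 0) (𝓝[>] 0) := by
  refine tendsto_nhdsWithin_of_tendsto_nhds_of_eventually_within _ ?_
    (eventually_nhdsWithin_of_forall fun x hx => Real.rpow_pos_of_pos hx p)
  have h := (Real.continuousAt_rpow_const 0 p (Or.inr hp.le)).tendsto
  rw [Real.zero_rpow hp.ne'] at h
  exact h.mono_left nhdsWithin_le_nhds

theorem eventually_le_rpow_nhdsGT_zero {θ : ℝ} (hθ : θ ≤ 1) :
    ∀ᶠ δ in 𝓝[>] (0 : ℝ), δ ≤ δ ^ θ := by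
  filter_upwards [Ioo_mem_nhdsGT one_pos] with δ hδ
  exact Real.self_le_rpow_of_le_one hδ.1.le hδ.2.le hθ

theorem Real.natCast_le_neg_two_mul_log {k : ℕ} {δ : ℝ} (hδ : 0 < δ) (hk : 2 ^ k * δ ≤ 1) :
    (k : ℝ) ≤ -2 * Real.log δ := by
  have h := Real.log_le_log (by positivity) hk
  rw [Real.log_one, Real.log_mul (by positivity) hδ.ne', Real.log_pow] at h
  nlinarith [Real.log_two_gt_d9, (k.cast_nonneg : (0 : ℝ) ≤ k)]

theorem ENNReal.tsum_image_le {α β : Type*} (f : α → β) (s : Set α) (g : β → ℝ≥0∞) :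
    ∑' y : ↑(f '' s), g y ≤ ∑' x : ↑s, g (f x) := by
  rw [image_eq_iUnion]
  simpa only [tsum_singleton] using ENNReal.tsum_biUnion_le_tsum g s fun x => {f x}

theorem ENNReal.tsum_image_setOf_one_le_mul_le {κ β : Type*} (V : κ → β) (W : κ → ℝ≥0∞)
    (K : ℝ≥0∞) (g : β → ℝ≥0∞) :
    ∑' y : ↑(V '' {q | 1 ≤ K * W q}), g y ≤ K * ∑' q, W q * g (V q) := by
  refine (ENNReal.tsum_image_le V _ g).trans ?_
  rw [tsum_subtype {q | 1 ≤ K * W q} fun q => g (V q), ← ENNReal.tsum_mul_left]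
  refine ENNReal.tsum_le_tsum fun q => indicator_apply_le' (fun hq => ?_) fun _ => zero_le
  rw [← mul_assoc]
  exact le_mul_of_one_le_left' hq

theorem Finset.exists_one_le_card_mul_of_one_le_sum {κ : Type*} {s : Finset κ} {f : κ → ℝ≥0∞}
    (h : 1 ≤ ∑ k ∈ s, f k) : ∃ k ∈ s, 1 ≤ s.card * f k := by
  obtain ⟨k, hk, hmax⟩ := s.exists_max_image f
    (Finset.nonempty_of_sum_ne_zero (one_pos.trans_le h).ne')
  exact ⟨k, hk, h.trans ((Finset.sum_le_card_nsmul _ _ _ hmax).trans_eq (nsmul_eq_mul _ _))⟩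

section FiniteDimensional

variable {E : Type*} [NormedAddCommGroup E] [NormedSpace ℝ E] [FiniteDimensional ℝ E]

theorem card_le_of_pairwise_lt_dist {s : Finset E} {x : E} {ρ r : ℝ} (hρ : 0 ≤ ρ) (hr : 0 < r)
    (hs : (s : Set E) ⊆ closedBall x ρ) (hsep : (s : Set E).Pairwise fun c c' => r < dist c c') :
    (s.card : ℝ) ≤ ((2 * ρ + r) / r) ^ finrank ℝ E := by
  let _ : MeasurableSpace E := borel E
  have _ : BorelSpace E := ⟨rfl⟩
  set μ : Measure E := Measure.addHaar
  have hdisj : (s : Set E).PairwiseDisjoint fun c => closedBall c (r / 2) :=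
    fun c hc c' hc' hne => closedBall_disjoint_closedBall (by linarith [hsep hc hc' hne])
  have hsub : ⋃ c ∈ s, closedBall c (r / 2) ⊆ closedBall x (ρ + r / 2) :=
    iUnion₂_subset fun c hc =>
      closedBall_subset_closedBall' (by linarith [mem_closedBall.1 (hs hc)])
  have hvol := measure_mono (μ := μ) hsub
  rw [measure_biUnion_finset hdisj fun c _ => measurableSet_closedBall] at hvol
  simp only [Measure.addHaar_closedBall μ _ (half_pos hr).le, Finset.sum_const, nsmul_eq_mul,
    Measure.addHaar_closedBall μ _ (by positivity : 0 ≤ ρ + r / 2), ← mul_assoc] at hvol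
  rw [ENNReal.mul_le_mul_iff_left (measure_ball_pos μ 0 one_pos).ne' measure_ball_lt_top.ne,
    ← ENNReal.ofReal_natCast, ← ENNReal.ofReal_mul (by positivity),
    ENNReal.ofReal_le_ofReal_iff (by positivity)] at hvol
  rw [show (2 * ρ + r) / r = (ρ + r / 2) / (r / 2) by field_simp, div_pow,
    le_div_iff₀ (by positivity)]
  exact hvol

theorem exists_finset_closedBall_cover (x : E) {ρ r : ℝ} (hρ : 0 ≤ ρ) (hr : 0 < r) :
    ∃ T : Finset E, closedBall x ρ ⊆ ⋃ c ∈ T, closedBall c r ∧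
      (T.card : ℝ) ≤ ((2 * ρ + r) / r) ^ finrank ℝ E := by
  set ε : ℝ≥0 := ⟨r, hr.le⟩
  set N : ℕ := ⌊((2 * ρ + r) / r) ^ finrank ℝ E⌋₊
  have hsep : ∀ C : Set E, IsSeparated ε C → C.Pairwise fun c c' => r < dist c c' :=
    fun C hC c hc c' hc' hne => by
      have h : (ε : ℝ≥0∞) < edist c c' := hC hc hc' hne
      rw [edist_dist, ← ENNReal.ofReal_coe_nnreal] at h
      exact (ENNReal.ofReal_lt_ofReal_iff'.1 h).1
  have hpack : packingNumber ε (closedBall x ρ) ≤ N := by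
    refine iSup₂_le fun C hC => iSup_le fun hCsep => not_lt.1 fun hlt => ?_
    obtain ⟨t, htC, htcard⟩ := exists_subset_encard_eq (Order.add_one_le_of_lt hlt)
    have htfin : t.Finite := finite_of_encard_eq_coe htcard
    have hcard := card_le_of_pairwise_lt_dist hρ hr (s := htfin.toFinset) (x := x)
      (by simpa using htC.trans hC) (by simpa using (hsep C hCsep).mono htC)
    rw [htfin.encard_eq_coe_toFinset_card, ← ENat.natCast_one, ← ENat.natCast_add,
      ENat.natCast_inj] at htcard
    rw [htcard, Nat.cast_add, Nat.cast_one] at hcard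
    exact (Nat.lt_floor_add_one _).not_ge hcard
  have hfin : packingNumber ε (closedBall x ρ) ≠ ⊤ :=
    ne_top_of_le_ne_top (ENat.natCast_ne_top N) hpack
  have hMcard := (encard_maximalSeparatedSet hfin).trans_le hpack
  have hMfin : (maximalSeparatedSet ε (closedBall x ρ)).Finite := finite_of_encard_le_coe hMcard
  refine ⟨hMfin.toFinset, fun y hy => ?_, ?_⟩
  · obtain ⟨c, hc, hyc⟩ := isCover_maximalSeparatedSet hfin hy
    have hyc : edist y c ≤ ε := hyc
    rw [edist_dist, ← ENNReal.ofReal_coe_nnreal, ENNReal.ofReal_le_ofReal_iff ε.coe_nonneg] at hyc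
    exact mem_iUnion₂.2 ⟨c, hMfin.mem_toFinset.2 hc, hyc⟩
  · rw [hMfin.encard_eq_coe_toFinset_card, ENat.natCast_le_natCast] at hMcard
    exact (Nat.cast_le.2 hMcard).trans (Nat.floor_le (by positivity))

variable [Nontrivial E]

theorem coverableAt_of_subset_closedBall {S : Set E} {x : E} {ρ : ℝ} (hS : S ⊆ closedBall x ρ)
    (hρ : 0 ≤ ρ) {θ s δ : ℝ} (hδ : 0 < δ) (hδθ : δ ≤ δ ^ θ) :
    CoverableAt θ s S δ
      (ENNReal.ofReal (((4 * ρ + δ ^ θ) / δ ^ θ) ^ finrank ℝ E * (δ ^ θ) ^ s)) := by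
  set Δ := δ ^ θ
  have hΔ : 0 < Δ := hδ.trans_le hδθ
  obtain ⟨T, hcov, hcard⟩ := exists_finset_closedBall_cover x hρ (half_pos hΔ)
  have hdiam : ∀ c : E, diam (closedBall c (Δ / 2)) = Δ := fun c => by
    rw [diam_closedBall_eq c (half_pos hΔ).le]; ring
  set 𝒰 := T.image fun c => closedBall c (Δ / 2)
  refine ⟨𝒰, 𝒰.countable_toSet, fun y hy => ?_, ?_, ?_⟩
  · obtain ⟨c, hc, hyc⟩ := mem_iUnion₂.1 (hcov (hS hy))
    exact ⟨_, Finset.mem_coe.2 (Finset.mem_image_of_mem _ hc), hyc⟩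
  · simp only [𝒰, Finset.coe_image, forall_mem_image, hdiam]
    exact fun _ _ => ⟨hδθ, le_rfl⟩
  · rw [Finset.tsum_subtype' 𝒰 fun U => ENNReal.ofReal (diam U ^ s)]
    calc ∑ U ∈ 𝒰, ENNReal.ofReal (diam U ^ s) ≤ 𝒰.card • ENNReal.ofReal (Δ ^ s) :=
          Finset.sum_le_card_nsmul _ _ _ <| by
            simp only [𝒰, Finset.forall_mem_image, hdiam, le_rfl, implies_true]
      _ ≤ T.card • ENNReal.ofReal (Δ ^ s) := nsmul_le_nsmul_left zero_le Finset.card_image_le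
      _ ≤ _ := by
        rw [nsmul_eq_mul, ← ENNReal.ofReal_natCast, ← ENNReal.ofReal_mul (by positivity)]
        refine ENNReal.ofReal_le_ofReal (mul_le_mul_of_nonneg_right ?_ (by positivity))
        refine hcard.trans_eq (congrArg (· ^ finrank ℝ E) ?_)
        field_simp
        ring

theorem eventually_coverableAt_of_isBounded {S : Set E} (hS : Bornology.IsBounded S) {θ u : ℝ}
    (hθ : 0 < θ) (hθ1 : θ ≤ 1) (hu : finrank ℝ E < u) {ε : ℝ} (hε : 0 < ε) :
    ∀ᶠ δ in 𝓝[>] 0, CoverableAt θ u S δ (ENNReal.ofReal ε) := by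
  obtain ⟨ρ, hρ, hSρ⟩ := hS.subset_closedBall_lt 0 (0 : E)
  set d := finrank ℝ E
  have hlim : Tendsto (fun Δ : ℝ => (4 * ρ + Δ) ^ d * Δ ^ (u - d)) (𝓝[>] 0) (𝓝 0) := by
    have h₁ : Tendsto (fun Δ : ℝ => (4 * ρ + Δ) ^ d) (𝓝[>] 0) (𝓝 ((4 * ρ + 0) ^ d)) :=
      ((continuous_const.add continuous_id).pow d).tendsto 0 |>.mono_left nhdsWithin_le_nhds
    have h₂ := (Real.tendsto_rpow_nhdsGT_zero (sub_pos.2 hu)).mono_right nhdsWithin_le_nhds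
    simpa using h₁.mul h₂
  have hcost : ∀ᶠ Δ in 𝓝[>] (0 : ℝ), ((4 * ρ + Δ) / Δ) ^ d * Δ ^ u ≤ ε := by
    filter_upwards [hlim.eventually (gt_mem_nhds hε), self_mem_nhdsWithin] with Δ hΔε hΔ
    refine le_of_eq_of_le ?_ hΔε.le
    rw [div_pow, Real.rpow_sub hΔ, Real.rpow_natCast]
    ring
  filter_upwards [(Real.tendsto_rpow_nhdsGT_zero hθ).eventually hcost,
    eventually_le_rpow_nhdsGT_zero hθ1, self_mem_nhdsWithin] with δ hδε hδθ hδ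
  exact coverableAt_of_subset_closedBall hSρ hρ.le hδ hδθ |>.mono subset_rfl
    (ENNReal.ofReal_le_ofReal hδε)

end FiniteDimensional

theorem ofReal_pow_le_tsum_diam_pow_of_closedBall_subset_image {X E ι : Type*}
    [PseudoMetricSpace X] [NormedAddCommGroup E] [NormedSpace ℝ E] [FiniteDimensional ℝ E]
    [Countable ι] {f : X → E} (hf : LipschitzWith 1 f) {S : Set X} {c : E} {a : ℝ} (ha : 0 ≤ a)
    (hS : closedBall c a ⊆ f '' S) {U : ι → Set X} (hcov : S ⊆ ⋃ i, U i)
    (hbdd : ∀ i, Bornology.IsBounded (U i)) :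
    ENNReal.ofReal (a ^ finrank ℝ E) ≤
      ∑' i, {i | (U i ∩ S).Nonempty}.indicator
        (fun i => ENNReal.ofReal (diam (U i) ^ finrank ℝ E)) i := by
  classical
  let _ : MeasurableSpace E := borel E
  have _ : BorelSpace E := ⟨rfl⟩
  set μ : Measure E := Measure.addHaar
  have hz : ∀ i, ∃ z, ∀ x ∈ U i ∩ S, f x ∈ closedBall z (diam (U i)) := fun i => by
    rcases (U i ∩ S).eq_empty_or_nonempty with h | ⟨p, hp⟩
    · exact ⟨0, by simp [h]⟩
    · refine ⟨f p, fun x hx => ?_⟩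
      have := hf.dist_le_mul x p
      simp only [NNReal.coe_one, one_mul] at this
      exact this.trans (dist_le_diam_of_mem (hbdd i) hx.1 hp.1)
  choose z hz using hz
  set B : ι → Set E := fun i => if (U i ∩ S).Nonempty then closedBall (z i) (diam (U i)) else ∅
  have hB : closedBall c a ⊆ ⋃ i, B i := fun y hy => by
    obtain ⟨x, hxS, rfl⟩ := hS hy
    obtain ⟨i, hxi⟩ := mem_iUnion.1 (hcov hxS)
    have hne : (U i ∩ S).Nonempty := ⟨x, hxi, hxS⟩
    exact mem_iUnion.2 ⟨i, by simpa [B, hne] using hz i x ⟨hxi, hxS⟩⟩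
  have hμB : ∀ i, μ (B i) =
      {i | (U i ∩ S).Nonempty}.indicator (fun i => ENNReal.ofReal (diam (U i) ^ finrank ℝ E)) i *
        μ (ball 0 1) := fun i => by
    by_cases h : (U i ∩ S).Nonempty <;> simp [B, h, Measure.addHaar_closedBall μ _ diam_nonneg]
  have hvol := (measure_mono (μ := μ) hB).trans (measure_iUnion_le B)
  rw [Measure.addHaar_closedBall μ _ ha, tsum_congr hμB, ENNReal.tsum_mul_right] at hvol
  exact (ENNReal.mul_le_mul_iff_left (measure_ball_pos μ 0 one_pos).ne'
    measure_ball_lt_top.ne).1 hvol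

theorem closedBall_subset_orthogonalProjectionOnto_image_sphere {F : Type*}
    [NormedAddCommGroup F] [InnerProductSpace ℝ F] {v : F} (hv : ‖v‖ = 1) {a : ℝ} (ha : 0 ≤ a) :
    closedBall (0 : (ℝ ∙ v)ᗮ) a ⊆ (ℝ ∙ v)ᗮ.orthogonalProjectionOnto '' sphere 0 a := by
  intro y hy
  rw [mem_closedBall_zero_iff] at hy
  set c := √(a ^ 2 - ‖y‖ ^ 2)
  have hyv : inner ℝ (y : F) (c • v) = 0 := by
    rw [inner_smul_right, real_inner_comm,
      Submodule.mem_orthogonal_singleton_iff_inner_right.1 y.2, mul_zero]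
  refine ⟨y + c • v, ?_, ?_⟩
  · have h := norm_add_sq_eq_norm_sq_add_norm_sq_real hyv
    rw [norm_smul, hv, mul_one, Real.norm_eq_abs, abs_of_nonneg (Real.sqrt_nonneg _),
      Real.mul_self_sqrt (by nlinarith [norm_nonneg y])] at h
    rw [mem_sphere_zero_iff_norm, ← pow_left_inj₀ (norm_nonneg _) ha two_ne_zero, sq, h,
      Submodule.coe_norm]
    ring
  · rw [map_add, map_smul, Submodule.orthogonalProjectionOnto_mem_subspace_eq_self,
      Submodule.orthogonalProjectionOnto_apply_of_mem_orthogonal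
        ((ℝ ∙ v).le_orthogonal_orthogonal (Submodule.mem_span_singleton_self v)),
      smul_zero, add_zero]

theorem ofReal_pow_le_tsum_diam_pow_of_sphere_subset {F ι : Type*} [NormedAddCommGroup F]
    [InnerProductSpace ℝ F] [Countable ι] {m : ℕ} (hF : finrank ℝ F = m + 1) {a : ℝ}
    (ha : 0 ≤ a) {U : ι → Set F} (hcov : sphere 0 a ⊆ ⋃ i, U i)
    (hbdd : ∀ i, Bornology.IsBounded (U i)) :
    ENNReal.ofReal (a ^ m) ≤
      ∑' i, {i | (U i ∩ sphere 0 a).Nonempty}.indicator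
        (fun i => ENNReal.ofReal (diam (U i) ^ m)) i := by
  have _ : Fact (finrank ℝ F = m + 1) := ⟨hF⟩
  have _ : FiniteDimensional ℝ F := .of_fact_finrank_eq_succ m
  have _ : Nontrivial F := nontrivial_of_finrank_eq_succ hF
  obtain ⟨v, hv⟩ := exists_norm_eq F zero_le_one
  have hm := Submodule.finrank_orthogonal_span_singleton (𝕜 := ℝ) (n := m)
    (norm_ne_zero_iff.1 (hv.trans_ne one_ne_zero))
  rw [← hm]
  exact ofReal_pow_le_tsum_diam_pow_of_closedBall_subset_image
    (ℝ ∙ v)ᗮ.lipschitzWith_orthogonalProjectionOnto ha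
    (closedBall_subset_orthogonalProjectionOnto_image_sphere hv ha) hcov hbdd

section Grid

def gridCell (l : ℝ) (j : ℤ) : Set ℝ := Icc (j * l) ((j + 1) * l)

variable {l : ℝ}

theorem mem_gridCell_floor (hl : 0 < l) (x : ℝ) : x ∈ gridCell l ⌊x / l⌋ :=
  ⟨(le_div_iff₀ hl).1 (Int.floor_le _), (div_le_iff₀ hl).1 (Int.lt_floor_add_one _).le⟩

theorem diam_gridCell (hl : 0 ≤ l) (j : ℤ) : diam (gridCell l j) = l := by
  rw [gridCell, Real.diam_Icc (by nlinarith)]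
  ring

theorem exists_inter_gridCell_nonempty_subset_Icc (hl : 0 < l) {r : ℝ} (hrl : r ≤ l) (b : ℝ) :
    ∃ j₀ : ℤ, {j | (closedBall b r ∩ gridCell l j).Nonempty} ⊆ Icc j₀ (j₀ + 3) := by
  refine ⟨⌈(b - r) / l⌉ - 1, fun j ⟨y, hyb, hyj⟩ => ?_⟩
  obtain ⟨hyb₁, hyb₂⟩ := abs_le.1 (mem_closedBall.1 hyb)
  have hceil := Int.le_ceil ((b - r) / l)
  have h₁ : (b - r) / l ≤ ((j + 1 : ℤ) : ℝ) := by
    push_cast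
    exact (div_le_iff₀ hl).2 (by linarith [hyj.2])
  have h₂ : (j : ℝ) ≤ (b - r) / l + 2 := by
    rw [div_add' _ _ _ hl.ne', le_div_iff₀ hl]
    linarith [hyj.1]
  constructor
  · linarith [Int.ceil_le.2 h₁]
  · have : (j : ℝ) ≤ ((⌈(b - r) / l⌉ + 2 : ℤ) : ℝ) := by push_cast; linarith
    linarith [Int.cast_le.1 this]

theorem exists_dyadic_scale {δ r Δ : ℝ} {K : ℕ} (hδ : 0 < δ) (hδr : δ ≤ r) (hrΔ : r ≤ Δ)
    (hK : Δ < 2 ^ K * δ) : ∃ ℓ < K, r ≤ Δ / 2 ^ ℓ ∧ Δ / 2 ^ ℓ < 2 * r := by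
  have hr : 0 < r := hδ.trans_le hδr
  obtain ⟨ℓ, h₁, h₂⟩ := exists_nat_pow_near ((one_le_div hr).2 hrΔ) one_lt_two
  refine ⟨ℓ, (pow_lt_pow_iff_right₀ one_lt_two).1 (h₁.trans_lt ?_), ?_, ?_⟩
  · rw [div_lt_iff₀ hr]
    nlinarith
  · rw [le_div_iff₀ (by positivity), mul_comm, ← le_div_iff₀ hr]
    exact h₁
  · rw [div_lt_iff₀ (by positivity), mul_comm, ← mul_assoc, ← pow_succ, ← div_lt_iff₀ hr]
    exact h₂

end Grid

section DyadicSelection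

variable {ι : Type*}

noncomputable def cellMass (Δ : ℝ) (ℓ : ι → ℕ) (b r : ι → ℝ) (w : ι → ℝ≥0∞) (q : ℕ × ℤ) :
    ℝ≥0∞ :=
  ∑' i, {i | ℓ i = q.1 ∧ (closedBall (b i) (r i) ∩ gridCell (Δ / 2 ^ q.1) q.2).Nonempty}.indicator
    w i

variable {Δ t : ℝ} {ℓ : ι → ℕ} {b r : ι → ℝ} {w : ι → ℝ≥0∞}

theorem tsum_indicator_le_sum_cellMass (hΔ : 0 < Δ) {K : ℕ} (hℓK : ∀ i, ℓ i < K) (x : ℝ) :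
    ∑' i, {i | x ∈ closedBall (b i) (r i)}.indicator w i ≤
      ∑ k ∈ Finset.range K, cellMass Δ ℓ b r w (k, ⌊x / (Δ / 2 ^ k)⌋) := by
  simp only [cellMass]
  rw [← Summable.tsum_finsetSum fun _ _ => ENNReal.summable]
  refine ENNReal.tsum_le_tsum fun i => indicator_apply_le' (fun hi => ?_) fun _ => zero_le
  refine le_trans ?_ (Finset.single_le_sum (fun _ _ => zero_le) (Finset.mem_range.2 (hℓK i)))
  rw [indicator_of_mem]
  exact ⟨rfl, x, hi, mem_gridCell_floor (by positivity) x⟩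

theorem tsum_indicator_inter_gridCell_nonempty_le (hΔ : 0 < Δ) {k : ℕ} {b r : ℝ}
    (hr : r ≤ Δ / 2 ^ k) (c : ℝ≥0∞) :
    ∑' q : ℕ × ℤ, {q | k = q.1 ∧ (closedBall b r ∩ gridCell (Δ / 2 ^ q.1) q.2).Nonempty}.indicator
      (fun _ => c) q ≤ 4 * c := by
  obtain ⟨j₀, hj₀⟩ := exists_inter_gridCell_nonempty_subset_Icc (by positivity) hr b
  set F : Finset (ℕ × ℤ) := {k} ×ˢ Finset.Icc j₀ (j₀ + 3)
  have hF : ∀ q ∉ F,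
      q ∉ {q | k = q.1 ∧ (closedBall b r ∩ gridCell (Δ / 2 ^ q.1) q.2).Nonempty} := by
    rintro ⟨k, j⟩ hq ⟨rfl, h⟩
    exact hq (by simpa [F] using hj₀ h)
  rw [tsum_eq_sum fun q hq => indicator_of_notMem (hF q hq) _]
  refine (Finset.sum_le_card_nsmul _ _ _ fun q _ => indicator_apply_le' (fun _ => le_rfl)
    fun _ => zero_le).trans_eq ?_
  simp [F, nsmul_eq_mul, show j₀ + 3 + 1 - j₀ = 4 by ring]

theorem tsum_cellMass_mul_le (hΔ : 0 < Δ) (ht₀ : 0 ≤ t) (ht₁ : t ≤ 1) (hr₀ : ∀ i, 0 < r i)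
    (hrℓ : ∀ i, r i ≤ Δ / 2 ^ ℓ i) (hℓr : ∀ i, Δ / 2 ^ ℓ i < 2 * r i) :
    ∑' q, cellMass Δ ℓ b r w q * ENNReal.ofReal ((Δ / 2 ^ q.1) ^ t) ≤
      8 * ∑' i, w i * ENNReal.ofReal (r i ^ t) := by
  have hmesh : ∀ i, ENNReal.ofReal ((Δ / 2 ^ ℓ i) ^ t) ≤ 2 * ENNReal.ofReal (r i ^ t) := fun i => by
    rw [← ENNReal.ofReal_ofNat 2, ← ENNReal.ofReal_mul zero_le_two]
    refine ENNReal.ofReal_le_ofReal ?_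
    calc (Δ / 2 ^ ℓ i) ^ t ≤ (2 * r i) ^ t := Real.rpow_le_rpow (by positivity) (hℓr i).le ht₀
      _ = 2 ^ t * r i ^ t := Real.mul_rpow zero_le_two (hr₀ i).le
      _ ≤ 2 * r i ^ t := mul_le_mul_of_nonneg_right (Real.rpow_le_self_of_one_le one_le_two ht₁)
          (Real.rpow_nonneg (hr₀ i).le t)
  calc ∑' q, cellMass Δ ℓ b r w q * ENNReal.ofReal ((Δ / 2 ^ q.1) ^ t)
      = ∑' i, ∑' q : ℕ × ℤ, {q | ℓ i = q.1 ∧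
          (closedBall (b i) (r i) ∩ gridCell (Δ / 2 ^ q.1) q.2).Nonempty}.indicator
            (fun _ => w i * ENNReal.ofReal ((Δ / 2 ^ ℓ i) ^ t)) q := by
        simp only [cellMass, ← ENNReal.tsum_mul_right]
        rw [ENNReal.tsum_comm]
        refine tsum_congr fun i => tsum_congr fun q => ?_
        classical
        simp only [indicator_apply, mem_ofPred_eq]
        split_ifs with h
        · rw [h.1]
        · rw [zero_mul]
    _ ≤ ∑' i, 8 * (w i * ENNReal.ofReal (r i ^ t)) := by
        refine ENNReal.tsum_le_tsum fun i => ?_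
        calc _ ≤ 4 * (w i * ENNReal.ofReal ((Δ / 2 ^ ℓ i) ^ t)) :=
              tsum_indicator_inter_gridCell_nonempty_le hΔ (hrℓ i) _
          _ ≤ 4 * (w i * (2 * ENNReal.ofReal (r i ^ t))) := by grw [hmesh i]
          _ = 8 * (w i * ENNReal.ofReal (r i ^ t)) := by ring
    _ = 8 * ∑' i, w i * ENNReal.ofReal (r i ^ t) := ENNReal.tsum_mul_left

end DyadicSelection

theorem coverableAt_of_one_le_tsum_indicator {ι : Type*} {θ t δ : ℝ} {K : ℕ} {b r : ι → ℝ}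
    {w : ι → ℝ≥0∞} {S : Set ℝ} (hδ : 0 < δ) (ht₀ : 0 ≤ t) (ht₁ : t ≤ 1)
    (hr : ∀ i, δ ≤ r i ∧ r i ≤ δ ^ θ) (hK : δ ^ θ < 2 ^ K * δ)
    (hS : ∀ x ∈ S, 1 ≤ ∑' i, {i | x ∈ closedBall (b i) (r i)}.indicator w i) :
    CoverableAt θ t S δ (8 * K * ∑' i, w i * ENNReal.ofReal (r i ^ t)) := by
  set Δ := δ ^ θ
  have hΔ : 0 < Δ := Real.rpow_pos_of_pos hδ θ
  choose ℓ hℓK hrℓ hℓr using fun i => exists_dyadic_scale hδ (hr i).1 (hr i).2 hK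
  set cell : ℕ × ℤ → Set ℝ := fun q => gridCell (Δ / 2 ^ q.1) q.2
  have hdiam : ∀ q, diam (cell q) = Δ / 2 ^ q.1 := fun q => diam_gridCell (by positivity) _
  set Q := {q | 1 ≤ (K : ℝ≥0∞) * cellMass Δ ℓ b r w q}
  refine ⟨cell '' Q, (to_countable Q).image cell, fun x hx => ?_, ?_, ?_⟩
  · obtain ⟨k, -, hk⟩ := Finset.exists_one_le_card_mul_of_one_le_sum
      ((hS x hx).trans (tsum_indicator_le_sum_cellMass hΔ hℓK x))
    rw [Finset.card_range] at hk
    exact ⟨cell _, mem_image_of_mem cell hk, mem_gridCell_floor (by positivity) x⟩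
  · rintro _ ⟨q, hq, rfl⟩
    obtain ⟨i, hi, -⟩ : ∃ i, ℓ i = q.1 ∧
        (closedBall (b i) (r i) ∩ gridCell (Δ / 2 ^ q.1) q.2).Nonempty := by
      by_contra! h
      have : cellMass Δ ℓ b r w q = 0 := ENNReal.tsum_eq_zero.2 fun i =>
        indicator_of_notMem (fun hi => hi.2.ne_empty (h i hi.1)) _
      simp [Q, this] at hq
    rw [hdiam, ← hi]
    exact ⟨(hr i).1.trans (hrℓ i), div_le_self hΔ.le (one_le_pow₀ one_le_two)⟩
  · calc ∑' V : ↑(cell '' Q), ENNReal.ofReal (diam (V : Set ℝ) ^ t)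
        ≤ K * ∑' q, cellMass Δ ℓ b r w q * ENNReal.ofReal (diam (cell q) ^ t) :=
          ENNReal.tsum_image_setOf_one_le_mul_le cell _ _ fun V => ENNReal.ofReal (diam V ^ t)
      _ ≤ K * (8 * ∑' i, w i * ENNReal.ofReal (r i ^ t)) := by
          simp only [hdiam]
          gcongr
          exact tsum_cellMass_mul_le hΔ ht₀ ht₁ (fun i => hδ.trans_le (hr i).1) hrℓ hℓr
      _ = 8 * K * ∑' i, w i * ENNReal.ofReal (r i ^ t) := by ring

theorem coverableAt_inter_Iic {A : Set ℝ} (hA : A ⊆ Ici 0) {θ t δ R : ℝ} (hδ : 0 < δ)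
    (hδΔ : δ ≤ δ ^ θ) (hΔR : δ ^ θ ≤ R) :
    CoverableAt θ t (A ∩ Iic R) δ (ENNReal.ofReal (3 * R * (δ ^ θ) ^ t / δ ^ θ)) := by
  have hΔ : 0 < δ ^ θ := hδ.trans_le hδΔ
  refine (coverableAt_of_subset_closedBall (x := R / 2) (ρ := R / 2) (fun x hx => ?_) (by linarith)
    hδ hδΔ).mono subset_rfl (ENNReal.ofReal_le_ofReal ?_)
  · rw [Real.closedBall_eq_Icc]
    exact ⟨by linarith [mem_Ici.1 (hA hx.1)], by linarith [mem_Iic.1 hx.2]⟩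
  · rw [finrank_self, pow_one, div_mul_eq_mul_div]
    gcongr
    linarith

section Transfer

variable {F : Type*} [NormedAddCommGroup F] [InnerProductSpace ℝ F] {m : ℕ}
  {C : Set F} {A : Set ℝ} {θ s t δ : ℝ}

theorem one_le_tsum_indicator_of_sphere_subset {ι : Type*} [Countable ι]
    (hF : finrank ℝ F = m + 1) {U : ι → Set F} (hbdd : ∀ i, Bornology.IsBounded (U i))
    {p : ι → F} (hp : ∀ i, p i ∈ U i) {x R : ℝ} (hR : 0 < R) (hRx : R ≤ x)
    (hcov : sphere 0 x ⊆ ⋃ i, U i) :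
    1 ≤ ∑' i, {i | x ∈ closedBall ‖p i‖ (diam (U i))}.indicator
      (fun i => ENNReal.ofReal (diam (U i) ^ m / R ^ m)) i := by
  set T := {i | x ∈ closedBall ‖p i‖ (diam (U i))}
  have hRm : 0 < R ^ m := pow_pos hR m
  have hsub : {i | (U i ∩ sphere 0 x).Nonempty} ⊆ T := fun i ⟨y, hyU, hyx⟩ => by
    rw [mem_sphere_zero_iff_norm] at hyx
    rw [mem_ofPred_eq, mem_closedBall, Real.dist_eq, ← hyx]
    exact (abs_norm_sub_norm_le y (p i)).trans
      ((dist_eq_norm y (p i)).symm.trans_le (dist_le_diam_of_mem (hbdd i) hyU (hp i)))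
  have hmass : ∀ i, T.indicator (fun i => ENNReal.ofReal (diam (U i) ^ m)) i =
      T.indicator (fun i => ENNReal.ofReal (diam (U i) ^ m / R ^ m)) i * ENNReal.ofReal (R ^ m) :=
    fun i => by
      by_cases hi : i ∈ T
      · rw [indicator_of_mem hi, indicator_of_mem hi, ← ENNReal.ofReal_mul (by positivity),
          div_mul_cancel₀ _ hRm.ne']
      · rw [indicator_of_notMem hi, indicator_of_notMem hi, zero_mul]
  have h := (ENNReal.ofReal_le_ofReal (pow_le_pow_left₀ hR.le hRx m)).trans
    ((ofReal_pow_le_tsum_diam_pow_of_sphere_subset hF (hR.le.trans hRx) hcov hbdd).trans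
      (ENNReal.tsum_le_tsum fun i => indicator_le_indicator_of_subset hsub (fun _ => zero_le) i))
  rw [tsum_congr hmass, ENNReal.tsum_mul_right] at h
  exact (ENNReal.mul_le_mul_iff_left (ENNReal.ofReal_pos.2 hRm).ne' ENNReal.ofReal_ne_top).1
    (by rwa [one_mul])

theorem coverableAt_inter_Ioi_of_sphere_subset (hF : finrank ℝ F = m + 1)
    (hAC : ∀ x ∈ A, sphere 0 x ⊆ C) {R : ℝ} {K : ℕ} (hδ : 0 < δ) (hR : 0 < R) (ht₀ : 0 ≤ t)
    (ht₁ : t ≤ 1) (hst : s ≤ m + t) (hK : δ ^ θ < 2 ^ K * δ) (hC : CoverableAt θ s C δ 1) :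
    CoverableAt θ t (A ∩ Ioi R) δ
      (8 * K * ENNReal.ofReal ((δ ^ θ) ^ (m + t - s) / R ^ m)) := by
  obtain ⟨𝒰, h𝒰, hcov, hdiam, hsum⟩ := hC
  have := h𝒰.to_subtype
  set r : 𝒰 → ℝ := fun U => diam (U : Set F)
  have hr₀ : ∀ U, 0 < r U := fun U => hδ.trans_le (hdiam U U.2).1
  have hbdd : ∀ U : 𝒰, Bornology.IsBounded (U : Set F) := fun U =>
    not_not.1 fun h => (hr₀ U).ne' (diam_eq_zero_of_unbounded h)
  have hne : ∀ U : 𝒰, (U : Set F).Nonempty := fun U =>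
    nonempty_iff_ne_empty.2 fun h => (hr₀ U).ne' (by simp [r, h])
  choose p hp using hne
  refine (coverableAt_of_one_le_tsum_indicator (S := A ∩ Ioi R) hδ ht₀ ht₁
    (fun U : 𝒰 => hdiam U U.2) hK fun x hx =>
      one_le_tsum_indicator_of_sphere_subset hF hbdd hp hR hx.2.le
        fun y hy => by simpa using hcov (hAC x hx.1 hy)).mono subset_rfl ?_
  have hterm : ∀ U, ENNReal.ofReal (r U ^ m / R ^ m) * ENNReal.ofReal (r U ^ t) ≤
      ENNReal.ofReal ((δ ^ θ) ^ (m + t - s) / R ^ m) * ENNReal.ofReal (r U ^ s) := fun U => by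
    rw [← ENNReal.ofReal_mul (by positivity), ← ENNReal.ofReal_mul (by positivity)]
    refine ENNReal.ofReal_le_ofReal ?_
    have hsplit : r U ^ m * r U ^ t = r U ^ s * r U ^ (m + t - s) := by
      rw [← Real.rpow_natCast, ← Real.rpow_add (hr₀ U), ← Real.rpow_add (hr₀ U)]
      ring_nf
    calc r U ^ m / R ^ m * r U ^ t = r U ^ s * r U ^ (m + t - s) / R ^ m := by
          rw [div_mul_eq_mul_div, hsplit]
      _ ≤ r U ^ s * (δ ^ θ) ^ (m + t - s) / R ^ m := by
          gcongr
          exact (hdiam U U.2).2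
      _ = (δ ^ θ) ^ (m + t - s) / R ^ m * r U ^ s := by ring
  gcongr
  calc ∑' U, ENNReal.ofReal (r U ^ m / R ^ m) * ENNReal.ofReal (r U ^ t)
      ≤ ∑' U, ENNReal.ofReal ((δ ^ θ) ^ (m + t - s) / R ^ m) * ENNReal.ofReal (r U ^ s) :=
        ENNReal.tsum_le_tsum hterm
    _ ≤ ENNReal.ofReal ((δ ^ θ) ^ (m + t - s) / R ^ m) := by
        rw [ENNReal.tsum_mul_left]
        exact mul_le_of_le_one_right' hsum

theorem coverableAt_of_sphere_subset (hF : finrank ℝ F = m + 1) (hA : A ⊆ Ici 0)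
    (hAC : ∀ x ∈ A, sphere 0 x ⊆ C) (hθ : 0 ≤ θ) (hθ₁ : θ ≤ 1) (hδ : 0 < δ) (hδ₁ : δ < 1)
    {c : ℝ} (hc : c ≤ 1) (ht₀ : 0 ≤ t) (ht₁ : t ≤ 1) (hst : s ≤ m + t)
    (hC : CoverableAt θ s C δ 1) :
    CoverableAt θ t A δ (ENNReal.ofReal (3 * (δ ^ θ) ^ (c + t - 1) +
      8 * (1 - 2 * Real.log δ) * (δ ^ θ) ^ (m + t - s - c * m))) := by
  set Δ := δ ^ θ
  have hΔ₀ : 0 < Δ := Real.rpow_pos_of_pos hδ θ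
  have hΔ₁ : Δ ≤ 1 := Real.rpow_le_one hδ.le hδ₁.le hθ
  have hδΔ : δ ≤ Δ := Real.self_le_rpow_of_le_one hδ.le hδ₁.le hθ₁
  have hΔR : Δ ≤ Δ ^ c := by simpa using Real.rpow_le_rpow_of_exponent_ge hΔ₀ hΔ₁ hc
  obtain ⟨k, hk₁, hk₂⟩ := exists_nat_pow_near ((one_le_div hδ).2 hδΔ) one_lt_two
  have hk : (k : ℝ) ≤ -2 * Real.log δ := Real.natCast_le_neg_two_mul_log hδ <| by
    rw [le_div_iff₀ hδ] at hk₁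
    linarith
  refine ((coverableAt_inter_Iic hA hδ hδΔ hΔR).union
    (coverableAt_inter_Ioi_of_sphere_subset hF hAC hδ (Real.rpow_pos_of_pos hΔ₀ c) ht₀ ht₁ hst
      ((div_lt_iff₀ hδ).1 hk₂) hC)).mono
    (fun x hx => (le_or_gt x (Δ ^ c)).imp (⟨hx, ·⟩) (⟨hx, ·⟩)) ?_
  have hsmall : 3 * Δ ^ c * Δ ^ t / Δ = 3 * Δ ^ (c + t - 1) := by
    rw [Real.rpow_sub hΔ₀, Real.rpow_one, Real.rpow_add hΔ₀]
    ring
  have hbig : Δ ^ (m + t - s) / (Δ ^ c) ^ m = Δ ^ (m + t - s - c * m) := by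
    rw [Real.rpow_sub hΔ₀ _ (c * m), ← Real.rpow_natCast, ← Real.rpow_mul hΔ₀.le]
  have hlog : 0 ≤ 1 - 2 * Real.log δ := by linarith [Real.log_neg hδ hδ₁]
  rw [hsmall, hbig, ENNReal.ofReal_add (by positivity) (by positivity)]
  gcongr
  rw [show (8 : ℝ≥0∞) * ↑(k + 1) = ENNReal.ofReal (8 * (k + 1)) by norm_cast,
    ← ENNReal.ofReal_mul (by positivity)]
  refine ENNReal.ofReal_le_ofReal ?_
  gcongr
  linarith

theorem exists_lt_one_forall_eventually_coverableAt (hF : finrank ℝ F = m + 1)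
    (hA : A ⊆ Ici 0) (hAC : ∀ x ∈ A, sphere 0 x ⊆ C) (hθ : 0 < θ) (hθ₁ : θ ≤ 1) (hs : 0 ≤ s)
    (hsm : s < m + 1) :
    ∃ t, 0 ≤ t ∧ t < 1 ∧ ∀ ε : ℝ, 0 < ε → ∀ᶠ δ in 𝓝[>] 0,
      CoverableAt θ s C δ 1 → CoverableAt θ t A δ (ENNReal.ofReal ε) := by
  -- `c = 2τ` and `t = 1 - τ` make the exponents in `coverableAt_of_sphere_subset` equal to
  -- `τ` and `(m + 1 - s) / 2`
  set τ := (m + 1 - s) / (4 * m + 2)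
  have hτ₀ : 0 < τ := div_pos (by linarith) (by positivity)
  have hτ : (4 * m + 2) * τ = m + 1 - s := mul_div_cancel₀ _ (by positivity)
  have hτ₁ : τ ≤ 1 / 2 := by nlinarith [(m.cast_nonneg : (0 : ℝ) ≤ m)]
  refine ⟨1 - τ, by linarith, by linarith, fun ε hε => ?_⟩
  have hβ : 0 < (m + 1 - s) / 2 := by linarith
  have hpow : ∀ {p : ℝ}, 0 < p → Tendsto (fun δ : ℝ => (δ ^ θ) ^ p) (𝓝[>] 0) (𝓝 0) := fun hp =>
    ((Real.tendsto_rpow_nhdsGT_zero hp).comp (Real.tendsto_rpow_nhdsGT_zero hθ)).mono_right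
      nhdsWithin_le_nhds
  have hlog : Tendsto (fun δ : ℝ => Real.log δ * (δ ^ θ) ^ ((m + 1 - s) / 2)) (𝓝[>] 0) (𝓝 0) :=
    (tendsto_log_mul_rpow_nhdsGT_zero (mul_pos hθ hβ)).congr' <| by
      filter_upwards [self_mem_nhdsWithin] with δ hδ
      rw [Real.rpow_mul (le_of_lt hδ)]
  have hlim := ((hpow hτ₀).const_mul 3).add (((hpow hβ).sub (hlog.const_mul 2)).const_mul 8)
  simp only [mul_zero, sub_zero, add_zero] at hlim
  filter_upwards [hlim.eventually (gt_mem_nhds hε), Ioo_mem_nhdsGT one_pos] with δ hδε hδ hC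
  refine (coverableAt_of_sphere_subset hF hA hAC hθ.le hθ₁ hδ.1 hδ.2 (c := 2 * τ) (by linarith)
    (by linarith) (by linarith) (by nlinarith [mul_nonneg (m.cast_nonneg : (0 : ℝ) ≤ m) hτ₀.le])
    hC).mono subset_rfl (ENNReal.ofReal_le_ofReal (le_of_eq_of_le ?_ hδε.le))
  rw [show 2 * τ + (1 - τ) - 1 = τ by ring,
    show m + (1 - τ) - s - 2 * τ * m = (m + 1 - s) / 2 by linear_combination (-1 / 2 : ℝ) * hτ]
  ring

end Transfer

theorem stmt11_general (d : ℕ) (hd : 2 ≤ d) (θ : ℝ) (hθ : 0 < θ) (hθ' : θ ≤ 1) (a : ℕ → ℝ)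
    (ha : StrictAnti a) (hapos : ∀ n, 0 < a n) :
    (updim θ (Set.range a) = 1 → updim θ (concentricSeq d a) = d) ∧
      (lodim θ (Set.range a) = 1 → lodim θ (concentricSeq d a) = d) := by
  obtain ⟨m, rfl⟩ : ∃ m, d = m + 1 := ⟨d - 1, by omega⟩
  have hF : finrank ℝ (EuclideanSpace ℝ (Fin (m + 1))) = m + 1 := finrank_euclideanSpace_fin
  have hC : Bornology.IsBounded (concentricSeq (m + 1) a) :=
    isBounded_closedBall.subset fun x ⟨n, hn⟩ =>
      mem_closedBall_zero_iff.2 (hn.trans_le (ha.antitone n.zero_le))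
  have hup := fun u (hu : ((m + 1 : ℕ) : ℝ) < u) ε (hε : (0 : ℝ) < ε) =>
    eventually_coverableAt_of_isBounded hC hθ hθ' (u := u) (by rwa [hF]) hε
  have hlow := fun s (hs : 0 ≤ s) (hsm : s < ((m + 1 : ℕ) : ℝ)) =>
    exists_lt_one_forall_eventually_coverableAt (C := concentricSeq (m + 1) a) hF
      (range_subset_iff.2 fun n => (hapos n).le)
      (by rintro _ ⟨n, rfl⟩ x hx; exact ⟨n, mem_sphere_zero_iff_norm.1 hx⟩) hθ hθ' hs
      (by exact_mod_cast hsm)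
  refine ⟨fun hA => updim_eq_of_transfer (F := range a) (Nat.cast_nonneg _) hup fun s hs hsm => ?_,
    fun hA => lodim_eq_of_transfer (F := range a) (Nat.cast_nonneg _) hup fun s hs hsm => ?_⟩
  all_goals
    obtain ⟨t, ht₀, ht₁, ht⟩ := hlow s hs hsm
    exact ⟨t, ht₀, by rwa [hA], ht⟩

theorem stmt11 (d : ℕ) (hd : 2 ≤ d) (θ : ℝ) (hθ : 0 < θ) (hθ' : θ ≤ 1) (a : ℕ → ℝ)
    (ha : StrictAnti a) (hapos : ∀ n, 0 < a n) (halim : Tendsto a atTop (nhds 0)) :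
    (updim θ (Set.range a) = 1 → updim θ (concentricSeq d a) = d) ∧
      (lodim θ (Set.range a) = 1 → lodim θ (concentricSeq d a) = d) :=
  stmt11_general d hd θ hθ hθ' a ha hapos
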